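/- Let r be a positive integer and m ≠ 1 a squarefree rational integer with m ≢ 1 (mod 9) and m ≢ −1 (mod 9), such that F(x) = x^(3^r) − m is irreducible over ℚ. Let α be a complex root of F and K = ℚ(α). Then K is monogenic. -/

import Mathlib

/-!
Write `n = 3 ^ r`. The discriminant of `x ^ n - m` is `± 3 ^ (r n) m ^ (n - 1)`, and it kills
`𝓞 K / ℤ[α]`, so it suffices that `ℤ[α]` be `p`-maximal at every prime `p ∣ 3 m`. For `p ∣ m`
the polynomial `x ^ n - m` is Eisenstein at `p` because `m` is squarefree. For `p = 3` pick
`c ∈ {0, ±1}` with `c ≡ m (mod 3)`: the minimal polynomial `(x + c) ^ n - m` of `α - c` has all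
middle coefficients divisible by `3` since `n` is a power of `3`, and its constant term `c - m`
is not divisible by `9` exactly because `m ≢ 0, ±1 (mod 9)`. So it is Eisenstein at `3`, and
`ℤ[α - c] = ℤ[α]`.
-/

open Polynomial NumberField

namespace Subalgebra

variable {R A : Type*} [CommRing R] [CommRing A] [Algebra R A]

/-- For `S = ℤ[θ]` and a prime `p` this is `p`-maximality: `p` does not divide the index of
`ℤ[θ]` in the ring of integers. -/
def IsMaximalAt (S : Subalgebra R A) (a : R) : Prop :=
  ∀ ⦃z : A⦄, IsIntegral R z → a • z ∈ S → z ∈ S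

variable {S : Subalgebra R A} {a b : R}

theorem isMaximalAt_of_isUnit (ha : IsUnit a) : S.IsMaximalAt a := by
  intro z _ hz
  obtain ⟨u, rfl⟩ := ha
  have := S.smul_mem hz ↑u⁻¹
  rwa [smul_smul, Units.inv_mul, one_smul] at this

theorem IsMaximalAt.mul (ha : S.IsMaximalAt a) (hb : S.IsMaximalAt b) :
    S.IsMaximalAt (a * b) :=
  fun _ hz habz => hb hz (ha (hz.smul b) (by rwa [smul_smul]))

theorem IsMaximalAt.pow (ha : S.IsMaximalAt a) : ∀ k : ℕ, S.IsMaximalAt (a ^ k)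
  | 0 => by simpa using isMaximalAt_of_isUnit isUnit_one
  | k + 1 => by rw [pow_succ]; exact (ha.pow k).mul ha

theorem isMaximalAt_of_forall_prime_dvd [IsDomain R] [UniqueFactorizationMonoid R]
    (ha0 : a ≠ 0) (h : ∀ p, Prime p → p ∣ a → S.IsMaximalAt p) : S.IsMaximalAt a := by
  induction a using UniqueFactorizationMonoid.induction_on_prime with
  | h₁ => exact absurd rfl ha0
  | h₂ u hu => exact isMaximalAt_of_isUnit hu
  | h₃ b p _ hp ih =>
    exact (h p hp (dvd_mul_right p b)).mul
      (ih (right_ne_zero_of_mul ha0) fun q hq hqb => h q hq (hqb.mul_left p))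

theorem isMaximalAt_adjoin_of_minpoly_isEisensteinAt {K L : Type*} [IsDomain R]
    [IsIntegrallyClosed R] [Field K] [Field L] [Algebra R K] [IsFractionRing R K] [Algebra K L]
    [Algebra R L] [IsScalarTower R K L] {θ : L} (hθ : IsIntegral R θ)
    (hgen : Algebra.adjoin K {θ} = ⊤) {p : R} (hp : Prime p)
    (hei : (minpoly R θ).IsEisensteinAt (Ideal.span {p})) :
    (Algebra.adjoin R {θ}).IsMaximalAt p :=
  fun _ hz hpz => mem_adjoin_of_smul_prime_smul_of_minpoly_isEisensteinAt
    (B := .ofAdjoinEqTop hθ.tower_top hgen) hp hθ hz hpz hei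

end Subalgebra

theorem Algebra.adjoin_singleton_sub_algebraMap {R A : Type*} [CommRing R] [Ring A]
    [Algebra R A] (x : A) (c : R) :
    Algebra.adjoin R {x - algebraMap R A c} = Algebra.adjoin R {x} := by
  apply le_antisymm <;> apply Algebra.adjoin_singleton_le
  · exact sub_mem (Algebra.self_mem_adjoin_singleton R x) (Subalgebra.algebraMap_mem _ c)
  · simpa using add_mem (Algebra.self_mem_adjoin_singleton R (x - algebraMap R A c))
      (Subalgebra.algebraMap_mem _ c)

namespace Polynomial

variable {R : Type*} [CommRing R] {𝓟 : Ideal R}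

theorem isEisensteinAt_X_add_C_pow_sub_C {n : ℕ} (hn : n ≠ 0) {c a : R}
    (hmid : ∀ k, 0 < k → k < n → c ^ (n - k) * n.choose k ∈ 𝓟)
    (h0 : c ^ n - a ∈ 𝓟) (h0' : c ^ n - a ∉ 𝓟 ^ 2) :
    ((X + C c) ^ n - C a).IsEisensteinAt 𝓟 := by
  have h𝓟 : 𝓟 ≠ ⊤ := by rintro rfl; exact h0' (by simp [Ideal.top_pow])
  have : Nontrivial R :=
    nontrivial_of_ne 0 1 fun h => h𝓟 ((Ideal.eq_top_iff_one _).2 (h ▸ 𝓟.zero_mem))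
  have hpow : ((X + C c) ^ n).natDegree = n := by
    rw [(monic_X_add_C c).natDegree_pow, natDegree_X_add_C, mul_one]
  have hmonic : ((X + C c) ^ n - C a).Monic := by
    refine ((monic_X_add_C c).pow n).sub_of_left (degree_C_le.trans_lt ?_)
    rw [degree_eq_natDegree ((monic_X_add_C c).pow n).ne_zero, hpow]
    exact_mod_cast Nat.pos_of_ne_zero hn
  have hdeg : ((X + C c) ^ n - C a).natDegree = n := by rw [natDegree_sub_C, hpow]
  have hcoeff (k : ℕ) : ((X + C c) ^ n - C a).coeff k =
      c ^ (n - k) * n.choose k - if k = 0 then a else 0 := by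
    rw [coeff_sub, coeff_X_add_C_pow, coeff_C]
  refine ⟨?_, fun {k} hk => ?_, ?_⟩
  · rwa [hmonic.leadingCoeff, ← Ideal.ne_top_iff_one]
  · rw [hdeg] at hk
    rcases Nat.eq_zero_or_pos k with rfl | hk0
    · simpa [hcoeff] using h0
    · simpa [hcoeff, hk0.ne'] using hmid k hk0 hk
  · simpa [hcoeff] using h0'

theorem isEisensteinAt_X_pow_sub_C {n : ℕ} (hn : n ≠ 0) {a : R} (ha : a ∈ 𝓟)
    (ha' : a ∉ 𝓟 ^ 2) : (X ^ n - C a).IsEisensteinAt 𝓟 := by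
  simpa using isEisensteinAt_X_add_C_pow_sub_C (𝓟 := 𝓟) hn (c := 0) (a := a)
    (fun k _ hkn => by simp [zero_pow (Nat.sub_ne_zero_of_lt hkn)])
    (by simpa [zero_pow hn] using neg_mem ha) (by simpa [zero_pow hn] using ha')

theorem isEisensteinAt_X_add_C_prime_pow_sub_C {p : ℕ} (hp : p.Prime) (r : ℕ) {c a : R}
    (hp𝓟 : (p : R) ∈ 𝓟) (h0 : c ^ p ^ r - a ∈ 𝓟) (h0' : c ^ p ^ r - a ∉ 𝓟 ^ 2) :
    ((X + C c) ^ p ^ r - C a).IsEisensteinAt 𝓟 := by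
  refine isEisensteinAt_X_add_C_pow_sub_C (pow_ne_zero r hp.ne_zero) (fun k hk hkn => ?_) h0 h0'
  obtain ⟨q, hq⟩ := hp.dvd_choose_pow hk.ne' hkn.ne
  rw [hq, Nat.cast_mul]
  exact 𝓟.mul_mem_left _ (𝓟.mul_mem_right _ hp𝓟)

end Polynomial

theorem Algebra.discr_powerBasis_of_minpoly_eq_X_pow_sub_C {K L : Type*} [Field K] [Field L]
    [Algebra K L] [Algebra.IsSeparable K L] (B : PowerBasis K L) {n : ℕ} {a : K}
    (h : minpoly K B.gen = X ^ n - C a) :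
    Algebra.discr K B.basis = (-1) ^ (n * (n - 1) / 2) * (n ^ n * (-a) ^ (n - 1)) := by
  have hdim : B.dim = n := by rw [← B.natDegree_minpoly, h, natDegree_X_pow_sub_C]
  have hn0 : n ≠ 0 := hdim ▸ B.dim_pos.ne'
  have hnorm : Algebra.norm K B.gen = (-1) ^ n * -a := by
    rw [PowerBasis.norm_gen_eq_coeff_zero_minpoly, h, hdim]
    simp [coeff_X_pow, hn0.symm]
  have hsign : ((-1 : K) ^ n) ^ (n - 1) = 1 := by
    rw [← pow_mul, (Nat.even_mul_pred_self n).neg_one_pow]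
  have := B.finite
  rw [Algebra.discr_powerBasis_eq_norm, B.finrank, hdim, h, derivative_sub, derivative_C,
    sub_zero, derivative_X_pow, map_mul, aeval_C, aeval_X_pow, map_mul, map_pow,
    Algebra.norm_algebraMap, B.finrank, hdim, hnorm, mul_pow, hsign, one_mul]

theorem Int.exists_three_dvd_pow_sub_not_nine_dvd {n : ℕ} (hn : Odd n) {m : ℤ} (h9 : ¬ 9 ∣ m)
    (h1 : ¬ m ≡ 1 [ZMOD 9]) (h2 : ¬ m ≡ -1 [ZMOD 9]) :
    ∃ c : ℤ, 3 ∣ c ^ n - m ∧ ¬ 9 ∣ c ^ n - m := by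
  unfold Int.ModEq at h1 h2
  rcases (by omega : m % 3 = 0 ∨ m % 3 = 1 ∨ m % 3 = 2) with h | h | h
  · exact ⟨0, by rw [zero_pow hn.pos.ne']; omega⟩
  · exact ⟨1, by rw [one_pow]; omega⟩
  · exact ⟨-1, by rw [hn.neg_one_pow]; omega⟩

theorem NumberField.RingOfIntegers.adjoin_singleton_eq_top_of_forall_isIntegral {K : Type*}
    [Field K] {θ : 𝓞 K} (h : ∀ z : K, IsIntegral ℤ z → z ∈ Algebra.adjoin ℤ {(θ : K)}) :
    Algebra.adjoin ℤ {θ} = ⊤ := by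
  rw [eq_top_iff]
  rintro x -
  have hx : (x : K) ∈ (Algebra.adjoin ℤ {θ}).map (IsScalarTower.toAlgHom ℤ (𝓞 K) K) := by
    rw [AlgHom.map_adjoin_singleton]
    exact h x x.isIntegral_coe
  obtain ⟨y, hy, hyx⟩ := Subalgebra.mem_map.1 hx
  exact RingOfIntegers.coe_injective hyx ▸ hy

section PureField

variable {K : Type*} [Field K] [NumberField K] {α : K} {n : ℕ} {m : ℤ}

theorem minpoly_int_sub_intCast (hα : IsIntegral ℤ α) (hmin : minpoly ℚ α = X ^ n - C (m : ℚ))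
    (c : ℤ) : minpoly ℤ (α - c) = (X + C c) ^ n - C m := by
  have hint : IsIntegral ℤ (α - c) := hα.sub isIntegral_algebraMap
  apply map_injective (algebraMap ℤ ℚ) (algebraMap ℤ ℚ).injective_int
  rw [← minpoly.isIntegrallyClosed_eq_field_fractions' ℚ hint]
  simpa [hmin] using minpoly.sub_algebraMap α (c : ℚ)

theorem isMaximalAt_adjoin_of_isEisensteinAt (hα : IsIntegral ℤ α)
    (hmin : minpoly ℚ α = X ^ n - C (m : ℚ)) (hgen : Algebra.adjoin ℚ {α} = ⊤) {c p : ℤ}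
    (hp : Prime p) (hei : ((X + C c) ^ n - C m).IsEisensteinAt (Ideal.span {p})) :
    (Algebra.adjoin ℤ {α}).IsMaximalAt p := by
  rw [← Algebra.adjoin_singleton_sub_algebraMap α c]
  refine Subalgebra.isMaximalAt_adjoin_of_minpoly_isEisensteinAt (K := ℚ)
    (hα.sub isIntegral_algebraMap) ?_ hp ?_
  · simpa [hgen] using Algebra.adjoin_singleton_sub_algebraMap (R := ℚ) α c
  · simpa [minpoly_int_sub_intCast hα hmin c] using hei

theorem isMaximalAt_adjoin_of_prime_dvd (hα : IsIntegral ℤ α)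
    (hmin : minpoly ℚ α = X ^ n - C (m : ℚ)) (hgen : Algebra.adjoin ℚ {α} = ⊤) (hn : n ≠ 0)
    (hm : Squarefree m) {p : ℤ} (hp : Prime p) (hpm : p ∣ m) :
    (Algebra.adjoin ℤ {α}).IsMaximalAt p := by
  have hp2 : ¬ p ^ 2 ∣ m := fun h => hp.not_isUnit (hm p (by rwa [← sq]))
  refine isMaximalAt_adjoin_of_isEisensteinAt hα hmin hgen (c := 0) hp ?_
  simpa using isEisensteinAt_X_pow_sub_C hn (Ideal.mem_span_singleton.2 hpm)
    (by rwa [Ideal.span_singleton_pow, Ideal.mem_span_singleton])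

theorem isMaximalAt_adjoin_three {r : ℕ} (hα : IsIntegral ℤ α)
    (hmin : minpoly ℚ α = X ^ 3 ^ r - C (m : ℚ)) (hgen : Algebra.adjoin ℚ {α} = ⊤)
    (h9 : ¬ 9 ∣ m) (h1 : ¬ m ≡ 1 [ZMOD 9]) (h2 : ¬ m ≡ -1 [ZMOD 9]) :
    (Algebra.adjoin ℤ {α}).IsMaximalAt 3 := by
  obtain ⟨c, hc3, hc9⟩ :=
    Int.exists_three_dvd_pow_sub_not_nine_dvd (Odd.pow (by decide : Odd 3)) h9 h1 h2
  refine isMaximalAt_adjoin_of_isEisensteinAt hα hmin hgen (c := c) Int.prime_three ?_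
  refine isEisensteinAt_X_add_C_prime_pow_sub_C Nat.prime_three r
    (by simp) (Ideal.mem_span_singleton.2 hc3) ?_
  rwa [Ideal.span_singleton_pow, Ideal.mem_span_singleton, show (3 : ℤ) ^ 2 = 9 by norm_num]

theorem discr_X_pow_sub_C_smul_mem_adjoin (hα : IsIntegral ℤ α)
    (hmin : minpoly ℚ α = X ^ n - C (m : ℚ)) (hgen : Algebra.adjoin ℚ {α} = ⊤) {z : K}
    (hz : IsIntegral ℤ z) :
    ((-1) ^ (n * (n - 1) / 2) * (n ^ n * (-m) ^ (n - 1)) : ℤ) • z ∈ Algebra.adjoin ℤ {α} := by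
  have h := Algebra.discr_mul_isIntegral_mem_adjoin ℚ
    (B := .ofAdjoinEqTop hα.tower_top hgen) hα hz
  rw [Algebra.discr_powerBasis_of_minpoly_eq_X_pow_sub_C _ hmin,
    PowerBasis.ofAdjoinEqTop_gen] at h
  rw [← Int.cast_smul_eq_zsmul ℚ]
  push_cast
  exact h

theorem mem_adjoin_of_isIntegral_of_minpoly_eq_X_three_pow_sub_C {r : ℕ} (hα : IsIntegral ℤ α)
    (hmin : minpoly ℚ α = X ^ 3 ^ r - C (m : ℚ)) (hgen : Algebra.adjoin ℚ {α} = ⊤)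
    (hm : Squarefree m) (h1 : ¬ m ≡ 1 [ZMOD 9]) (h2 : ¬ m ≡ -1 [ZMOD 9]) {z : K}
    (hz : IsIntegral ℤ z) : z ∈ Algebra.adjoin ℤ {α} := by
  have h9 : ¬ 9 ∣ m := fun h => by
    simpa [Int.isUnit_iff] using hm 3 (by simpa using h)
  have hmax3 := isMaximalAt_adjoin_three hα hmin hgen h9 h1 h2
  have hmaxm : (Algebra.adjoin ℤ {α}).IsMaximalAt m :=
    Subalgebra.isMaximalAt_of_forall_prime_dvd hm.ne_zero fun p hp hpm =>
      isMaximalAt_adjoin_of_prime_dvd hα hmin hgen (pow_ne_zero r three_ne_zero) hm hp hpm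
  have hmax_neg_one :=
    Subalgebra.isMaximalAt_of_isUnit (S := Algebra.adjoin ℤ {α}) isUnit_neg_one
  refine Subalgebra.IsMaximalAt.mul ?_ (.mul ?_ ?_) hz
    (discr_X_pow_sub_C_smul_mem_adjoin hα hmin hgen hz)
  · exact hmax_neg_one.pow _
  · rw [Nat.cast_pow, Nat.cast_ofNat, ← pow_mul]
    exact hmax3.pow _
  · rw [neg_eq_neg_one_mul]
    exact (hmax_neg_one.mul hmaxm).pow _

end PureField

theorem pure_three_power_field_monogenic_general
    (r : ℕ) (m : ℤ) (hm : Squarefree m)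
    (hmod1 : ¬ m ≡ 1 [ZMOD 9]) (hmod2 : ¬ m ≡ -1 [ZMOD 9])
    (hF : Irreducible ((X : ℚ[X]) ^ 3 ^ r - C (m : ℚ)))
    (K : Type*) [Field K] [NumberField K] (α : K)
    (hgen : IntermediateField.adjoin ℚ {α} = ⊤)
    (hroot : α ^ 3 ^ r = (m : K)) :
    ∃ θ : 𝓞 K, Algebra.adjoin ℤ {θ} = ⊤ := by
  have hn : 3 ^ r ≠ 0 := pow_ne_zero r three_ne_zero
  have hα : IsIntegral ℤ α := .of_pow (Nat.pos_of_ne_zero hn) (hroot ▸ isIntegral_algebraMap)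
  have hmin : minpoly ℚ α = X ^ 3 ^ r - C (m : ℚ) :=
    (minpoly.eq_of_irreducible_of_monic hF (by simp [hroot]) (monic_X_pow_sub_C _ hn)).symm
  have hgen' : Algebra.adjoin ℚ {α} = ⊤ :=
    Algebra.adjoin_eq_top_of_primitive_element (IsIntegral.of_finite ℚ α).isAlgebraic hgen
  exact ⟨⟨α, hα⟩, RingOfIntegers.adjoin_singleton_eq_top_of_forall_isIntegral fun z hz =>
    mem_adjoin_of_isIntegral_of_minpoly_eq_X_three_pow_sub_C hα hmin hgen' hm hmod1 hmod2 hz⟩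

/-- If `m ≠ 1` is squarefree with `m ≢ ±1 (mod 9)` and `x^(3^r) - m` is irreducible
over `ℚ`, then `K = ℚ(α)` is monogenic, where `α` is a root. -/
theorem pure_three_power_field_monogenic
    (r : ℕ) (hr : 0 < r) (m : ℤ) (hm : Squarefree m) (hm1 : m ≠ 1)
    (hmod1 : ¬ m ≡ 1 [ZMOD 9]) (hmod2 : ¬ m ≡ -1 [ZMOD 9])
    (hF : Irreducible ((X : ℚ[X]) ^ 3 ^ r - C (m : ℚ)))
    (K : Type*) [Field K] [NumberField K] (α : K)
    (hgen : IntermediateField.adjoin ℚ {α} = ⊤)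
    (hroot : α ^ 3 ^ r = (m : K)) :
    ∃ θ : 𝓞 K, Algebra.adjoin ℤ {θ} = ⊤ :=
  pure_three_power_field_monogenic_general r m hm hmod1 hmod2 hF K α hgen hroot
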